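/- arXiv:2404.15597 — 5 statements merged into one kernel-verified Lean document; each statement's English description precedes it below -/
import Mathlib

section
/- Let q : ℝ → ℝ be defined by q(u) = (1/2)·(1 − u/(1 + π²(u−1)²)) if u < 1 and q(u) = −u/(2(1 + π²(u−1)²)) if u ≥ 1. Then for every real number u, |q(u)| ≤ 13/25 (in particular |q(u)| < 1). -/
theorem lif_hard_reset_factor_bound
    (q : ℝ → ℝ)
    (hq : ∀ u : ℝ, q u =
      if u < 1 then (1/2) * (1 - u / (1 + Real.pi ^ 2 * (u - 1) ^ 2))
      else -u / (2 * (1 + Real.pi ^ 2 * (u - 1) ^ 2))) :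
    ∀ u : ℝ, |q u| ≤ 13 / 25 := by
  intro u
  rw [hq u]
  have hπ := Real.pi_gt_three
  have hπ2 : Real.pi ^ 2 ≥ 9 := by nlinarith
  set d := 1 + Real.pi ^ 2 * (u - 1) ^ 2 with hd
  have hdpos : 0 < d := by positivity
  rw [abs_le]
  split_ifs with h
  · constructor
    · have h1 : u ≤ (51/25) * d := by nlinarith [sq_nonneg (u - 1)]
      have h2 : u / d ≤ 51/25 := (div_le_iff₀ hdpos).mpr (by linarith)
      linarith
    · have h1 : (-(1/25)) * d ≤ u := by
        nlinarith [sq_nonneg (u + 7/18), sq_nonneg (u - 1)]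
      have h2 : -(1/25) ≤ u / d := (le_div_iff₀ hdpos).mpr (by linarith)
      linarith
  · push_neg at h
    have h2d : 0 < 2 * d := by linarith
    constructor
    · have h1 : u ≤ (26/25) * d := by
        nlinarith [sq_nonneg (u - 493/468), sq_nonneg (u - 1)]
      have h2 : u / (2 * d) ≤ 13/25 := (div_le_iff₀ h2d).mpr (by linarith)
      have : -u / (2 * d) = -(u / (2 * d)) := by ring
      rw [this]
      linarith
    · have h2 : -u / (2 * d) ≤ 0 :=
        div_nonpos_of_nonpos_of_nonneg (by linarith) (by linarith)
      linarith
end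

section
/- Let q : ℝ → ℝ be defined by q(u) = (1/2)·(1 − u/(1 + π²(u−1)²)) if u < 1 and q(u) = −u/(2(1 + π²(u−1)²)) if u ≥ 1. Let a, b : ℕ → ℝ and u : ℕ → ℝ be sequences satisfying the recurrence a_t = (1/2)·b_t + q(u_{t−1})·a_{t−1} for all t ≥ 1. Then for every t ≥ 1, |a_t − (1/2)·∑_{i=0}^{t−1} (∏_{j=1}^{i} q(u_{t−j}))·b_{t−i}| ≤ (13/25)^t · |a_0| (where the empty product equals 1). In particular, the deviation of a_t from the current-driven sum tends to 0 as t → ∞. -/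
/-!
Writing `D t` for the deviation of `a t` from the current-driven sum, the recurrence for `a` and the
matching recurrence for the sum give `D (t + 1) = q (u t) * D t`, so `D t` is `a 0` times a product
of `t` values of `q`. Every value of `q` lies in `[-13/25, 13/25]`, because the arctangent surrogate
`1 / (1 + π² x²)` decays fast enough to compensate the growth of `u` in the numerator.
-/

open Finset

/-- The per-step gradient factor `q(u) = β δ` of the LIF neuron with `β = 1/2`, `ϑ = 1`, `u_r = 0`. -/
noncomputable def lifGradFactor (u : ℝ) : ℝ :=
  if u < 1 then (1/2) * (1 - u / (1 + Real.pi ^ 2 * (u - 1) ^ 2))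
  else -u / (2 * (1 + Real.pi ^ 2 * (u - 1) ^ 2))

theorem abs_lifGradFactor_le (v : ℝ) : |lifGradFactor v| ≤ 13 / 25 := by
  have hpi : 9 ≤ Real.pi ^ 2 := by nlinarith [Real.pi_gt_three]
  set d := 1 + Real.pi ^ 2 * (v - 1) ^ 2
  have hd : 1 ≤ d := le_add_of_nonneg_right (by positivity)
  -- in both cases the remaining quadratic inequality in `v - 1` has discriminant `625 - 936 < 0`
  have hsq : 9 * (v - 1) ^ 2 ≤ Real.pi ^ 2 * (v - 1) ^ 2 :=
    mul_le_mul_of_nonneg_right hpi (sq_nonneg _)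
  unfold lifGradFactor
  rw [abs_le]
  split_ifs with hv
  · have hupper : v / d ≤ 1 := (div_le_one (by positivity)).2 (by linarith)
    have hlower : -1 / 25 ≤ v / d := by
      rw [le_div_iff₀ (by positivity)]
      nlinarith [sq_nonneg (v - 1 + 25 / 18)]
    constructor <;> linarith
  · have hupper : v / (2 * d) ≤ 13 / 25 := by
      rw [div_le_iff₀ (by positivity)]
      nlinarith [sq_nonneg (v - 1 - 25 / 468)]
    have hnonneg : 0 ≤ v / (2 * d) := div_nonneg (by linarith) (by positivity)
    rw [neg_div]
    constructor <;> linarith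

theorem prod_Icc_one_eq_prod_range {M : Type*} [CommMonoid M] (f : ℕ → M) (n : ℕ) :
    ∏ j ∈ Icc 1 n, f j = ∏ k ∈ range n, f (k + 1) := by
  rw [← Ico_add_one_right_eq_Icc, prod_Ico_eq_prod_range]
  simp only [add_tsub_cancel_right, add_comm 1]

section CurrentDriven

variable {R : Type*} [CommSemiring R]

/-- The solution of `x_{t+1} = b_{t+1} + r_t x_t`, `x_0 = 0`, unrolled. -/
def currentDrivenSum (r b : ℕ → R) (t : ℕ) : R :=
  ∑ i ∈ range t, (∏ j ∈ Icc 1 i, r (t - j)) * b (t - i)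

theorem currentDrivenSum_zero (r b : ℕ → R) : currentDrivenSum r b 0 = 0 := by
  simp [currentDrivenSum]

theorem currentDrivenSum_succ (r b : ℕ → R) (t : ℕ) :
    currentDrivenSum r b (t + 1) = b (t + 1) + r t * currentDrivenSum r b t := by
  have hprod (i : ℕ) :
      ∏ j ∈ Icc 1 (i + 1), r (t + 1 - j) = r t * ∏ j ∈ Icc 1 i, r (t - j) := by
    rw [prod_Icc_one_eq_prod_range, prod_Icc_one_eq_prod_range, prod_range_succ', mul_comm]
    congr 1
    exact prod_congr rfl fun k _ => congrArg r (by omega)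
  unfold currentDrivenSum
  rw [sum_range_succ', mul_sum]
  simp only [hprod, Nat.add_sub_add_right, mul_assoc]
  simp [add_comm]

end CurrentDriven

theorem sub_mul_currentDrivenSum_eq {R : Type*} [CommRing R] {r a b : ℕ → R} {c : R}
    (hrec : ∀ t, a (t + 1) = c * b (t + 1) + r t * a t) (t : ℕ) :
    a t - c * currentDrivenSum r b t = (∏ i ∈ range t, r i) * a 0 := by
  induction t with
  | zero => simp [currentDrivenSum_zero]
  | succ t ih => rw [hrec, currentDrivenSum_succ, prod_range_succ, mul_right_comm, ← ih]; ring

theorem abs_sub_mul_currentDrivenSum_le {r a b : ℕ → ℝ} {c K : ℝ} (hr : ∀ t, |r t| ≤ K)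
    (hrec : ∀ t, a (t + 1) = c * b (t + 1) + r t * a t) (t : ℕ) :
    |a t - c * currentDrivenSum r b t| ≤ K ^ t * |a 0| := by
  rw [sub_mul_currentDrivenSum_eq hrec, abs_mul, abs_prod]
  gcongr
  simpa using prod_le_prod (s := range t) (fun i _ => abs_nonneg (r i)) (fun i _ => hr i)

theorem lif_gradient_mainly_current_driven
    (q : ℝ → ℝ)
    (hq : ∀ u : ℝ, q u =
      if u < 1 then (1/2) * (1 - u / (1 + Real.pi ^ 2 * (u - 1) ^ 2))
      else -u / (2 * (1 + Real.pi ^ 2 * (u - 1) ^ 2)))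
    (a b u : ℕ → ℝ)
    (hrec : ∀ t : ℕ, 1 ≤ t → a t = (1/2) * b t + q (u (t - 1)) * a (t - 1)) :
    (∀ t : ℕ, 1 ≤ t →
      |a t - (1/2) * ∑ i ∈ Finset.range t,
          (∏ j ∈ Finset.Icc 1 i, q (u (t - j))) * b (t - i)| ≤
        (13 / 25 : ℝ) ^ t * |a 0|) ∧
    Filter.Tendsto
      (fun t : ℕ => a t - (1/2) * ∑ i ∈ Finset.range t,
          (∏ j ∈ Finset.Icc 1 i, q (u (t - j))) * b (t - i))
      Filter.atTop (nhds 0) := by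
  have hq_eq : q = lifGradFactor := funext hq
  have hr (t : ℕ) : |(q ∘ u) t| ≤ 13 / 25 := hq_eq ▸ abs_lifGradFactor_le (u t)
  have hrec_succ (t : ℕ) : a (t + 1) = 1 / 2 * b (t + 1) + (q ∘ u) t * a t :=
    hrec (t + 1) t.succ_pos
  have hbound := abs_sub_mul_currentDrivenSum_le hr hrec_succ
  refine ⟨fun t _ => hbound t, ?_⟩
  have hgeom : Filter.Tendsto (fun t : ℕ => (13 / 25 : ℝ) ^ t * |a 0|) Filter.atTop (nhds 0) := by
    simpa using (tendsto_pow_atTop_nhds_zero_of_lt_one (by norm_num) (by norm_num)).mul_const |a 0|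
  exact squeeze_zero_norm (fun t => (Real.norm_eq_abs _).trans_le (hbound t)) hgeom
end

section
/- Let f(x) = −x/(2(1 + π²(x−1)²)) and g(x) = (1/2)·(1 − x/(1 + π²(x−1)²)). Then g(x) = f(x) + 1/2 for all x ∈ ℝ; consequently g attains its global maximum (√(1 + 1/π²)/2)/(2 + 2π² + 2π²√(1 + 1/π²)) + 1/2 at x = −√(1 + 1/π²), and its global minimum −(√(1 + 1/π²)/2)/(2 + 2π² − 2π²√(1 + 1/π²)) + 1/2 at x = √(1 + 1/π²). -/
theorem lif_nonfiring_factor_extrema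
    (f g : ℝ → ℝ)
    (hf : ∀ x : ℝ, f x = -x / (2 * (1 + Real.pi ^ 2 * (x - 1) ^ 2)))
    (hg : ∀ x : ℝ, g x = (1/2) * (1 - x / (1 + Real.pi ^ 2 * (x - 1) ^ 2))) :
    (∀ x : ℝ, g x = f x + 1/2) ∧
    (∀ x : ℝ, g x ≤ g (-Real.sqrt (1 + 1 / Real.pi ^ 2))) ∧
    g (-Real.sqrt (1 + 1 / Real.pi ^ 2)) =
      (Real.sqrt (1 + 1 / Real.pi ^ 2) / 2) /
        (2 + 2 * Real.pi ^ 2 + 2 * Real.pi ^ 2 * Real.sqrt (1 + 1 / Real.pi ^ 2)) + 1/2 ∧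
    (∀ x : ℝ, g (Real.sqrt (1 + 1 / Real.pi ^ 2)) ≤ g x) ∧
    g (Real.sqrt (1 + 1 / Real.pi ^ 2)) =
      -((Real.sqrt (1 + 1 / Real.pi ^ 2) / 2) /
        (2 + 2 * Real.pi ^ 2 - 2 * Real.pi ^ 2 * Real.sqrt (1 + 1 / Real.pi ^ 2))) + 1/2 := by
  have hpi := Real.pi_pos
  have hp : (0:ℝ) < Real.pi ^ 2 := by positivity
  set p := Real.pi ^ 2 with hpdef
  set s := Real.sqrt (1 + 1 / p) with hsdef
  have hs0 : (0:ℝ) ≤ s := Real.sqrt_nonneg _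
  have hs2 : s ^ 2 = 1 + 1 / p := Real.sq_sqrt (by positivity)
  have hps2 : p * s ^ 2 = p + 1 := by
    rw [hs2]; field_simp
  have hden : ∀ x : ℝ, (0:ℝ) < 1 + p * (x - 1) ^ 2 := fun x => by positivity
  have hps2p : p ^ 2 * s ^ 2 = p * (p + 1) := by linear_combination p * hps2
  have hpslt : p * s < p + 1 := by nlinarith [hps2p, hp, mul_nonneg hp.le hs0]
  refine ⟨?_, ?_, ?_, ?_, ?_⟩
  · intro x
    have hD := (hden x).ne'
    rw [hf, hg]
    field_simp
    ring
  · intro x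
    rw [hg, hg]
    have h1 := hden x
    have h2 := hden (-s)
    have key : (-s) / (1 + p * (-s - 1) ^ 2) ≤ x / (1 + p * (x - 1) ^ 2) := by
      rw [div_le_div_iff₀ h2 h1]
      have hid : x * (1 + p * (-s - 1) ^ 2) + s * (1 + p * (x - 1) ^ 2)
          = p * s * (x + s) ^ 2 := by
        linear_combination (-(x + s)) * hps2
      nlinarith [mul_nonneg (mul_nonneg hp.le hs0) (sq_nonneg (x + s)), hid]
    linarith
  · rw [hg]
    have hD2 : (1:ℝ) + p * (-s - 1) ^ 2 = 2 + 2 * p + 2 * p * s := by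
      linear_combination hps2
    rw [hD2]
    have hne : (2:ℝ) + 2 * p + 2 * p * s ≠ 0 := by positivity
    field_simp
    ring
  · intro x
    rw [hg, hg]
    have h1 := hden x
    have h2 := hden s
    have key : x / (1 + p * (x - 1) ^ 2) ≤ s / (1 + p * (s - 1) ^ 2) := by
      rw [div_le_div_iff₀ h1 h2]
      have hid : s * (1 + p * (x - 1) ^ 2) - x * (1 + p * (s - 1) ^ 2)
          = p * s * (x - s) ^ 2 := by
        linear_combination (x - s) * hps2
      nlinarith [mul_nonneg (mul_nonneg hp.le hs0) (sq_nonneg (x - s)), hid]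
    linarith
  · rw [hg]
    have hD2 : (1:ℝ) + p * (s - 1) ^ 2 = 2 + 2 * p - 2 * p * s := by
      linear_combination hps2
    rw [hD2]
    have hpos : (0:ℝ) < 2 + 2 * p - 2 * p * s := by linarith
    have hne : (2:ℝ) + 2 * p - 2 * p * s ≠ 0 := hpos.ne'
    field_simp
    ring
end

section
/- Let f : ℝ → ℝ be defined by f(x) = −x/(2(1 + π²(x−1)²)). Then for every x ≥ 1, −(√(1 + 1/π²)/2)/(2 + 2π² − 2π²√(1 + 1/π²)) ≤ f(x) < 0; in particular |f(x)| < 1 for all x ≥ 1. -/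
theorem lif_firing_factor_range
    (f : ℝ → ℝ)
    (hf : ∀ x : ℝ, f x = -x / (2 * (1 + Real.pi ^ 2 * (x - 1) ^ 2))) :
    (∀ x : ℝ, 1 ≤ x →
      -((Real.sqrt (1 + 1 / Real.pi ^ 2) / 2) /
          (2 + 2 * Real.pi ^ 2 - 2 * Real.pi ^ 2 * Real.sqrt (1 + 1 / Real.pi ^ 2))) ≤ f x ∧
      f x < 0) ∧
    ∀ x : ℝ, 1 ≤ x → |f x| < 1 := by
  have hπ := Real.pi_pos
  have hπ2 : (0:ℝ) < Real.pi ^ 2 := by positivity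
  set s := Real.sqrt (1 + 1 / Real.pi ^ 2) with hs
  have hs2 : s ^ 2 = 1 + 1 / Real.pi ^ 2 := Real.sq_sqrt (by positivity)
  have hkey : Real.pi ^ 2 * s ^ 2 = Real.pi ^ 2 + 1 := by
    rw [hs2]; field_simp
  have hsq : 1 < s ^ 2 := by
    rw [hs2]; have := one_div_pos.mpr hπ2; linarith
  have hs1 : 1 < s := by
    nlinarith [hsq, Real.sqrt_nonneg (1 + 1 / Real.pi ^ 2)]
  have hspos : 0 < s := by linarith
  have hD : 0 < 2 + 2 * Real.pi ^ 2 - 2 * Real.pi ^ 2 * s := by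
    nlinarith [hkey, mul_pos hπ2 (mul_pos hspos (sub_pos.mpr hs1))]
  have hconst : -((s / 2) / (2 + 2 * Real.pi ^ 2 - 2 * Real.pi ^ 2 * s)) = -((s + 1) / 4) := by
    have h : (s / 2) / (2 + 2 * Real.pi ^ 2 - 2 * Real.pi ^ 2 * s) = (s + 1) / 4 := by
      rw [div_eq_div_iff hD.ne' (by norm_num : (4:ℝ) ≠ 0)]
      linear_combination 2 * hkey
    rw [h]
  constructor
  · intro x hx
    have hd : (0:ℝ) < 2 * (1 + Real.pi ^ 2 * (x - 1) ^ 2) := by positivity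
    constructor
    · rw [hf x, hconst]
      rw [neg_div, neg_le_neg_iff, div_le_div_iff₀ hd (by norm_num : (0:ℝ) < 4)]
      have hid : (s + 1) * (2 * (1 + Real.pi ^ 2 * (x - 1) ^ 2)) - 4 * x
          = 2 * (s + 1) * Real.pi ^ 2 * (x - s) ^ 2 := by
        linear_combination (4 * x - 2 * s - 2) * hkey
      have hnn : 0 ≤ 2 * (s + 1) * Real.pi ^ 2 * (x - s) ^ 2 := by positivity
      linarith
    · rw [hf x]
      exact div_neg_of_neg_of_pos (by linarith) hd
  · intro x hx
    have hd : (0:ℝ) < 2 * (1 + Real.pi ^ 2 * (x - 1) ^ 2) := by positivity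
    rw [hf x, abs_div, abs_neg, abs_of_pos (by linarith : (0:ℝ) < x), abs_of_pos hd,
      div_lt_one hd]
    have hπ9 : (9:ℝ) < Real.pi ^ 2 := by nlinarith [Real.pi_gt_three]
    nlinarith [hπ9, sq_nonneg (x - 1), sq_nonneg (12 * (x - 1) - 1)]
end

section
/- Let g : ℝ → ℝ be defined by g(x) = (1/2)·(1 − x/(1 + π²(x−1)²)). Then for every x < 1, 0 < g(x) ≤ (√(1 + 1/π²)/2)/(2 + 2π² + 2π²√(1 + 1/π²)) + 1/2; in particular |g(x)| < 1 for all x < 1. -/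
theorem lif_nonfiring_factor_range
    (g : ℝ → ℝ)
    (hg : ∀ x : ℝ, g x = (1/2) * (1 - x / (1 + Real.pi ^ 2 * (x - 1) ^ 2))) :
    (∀ x : ℝ, x < 1 →
      0 < g x ∧
      g x ≤ (Real.sqrt (1 + 1 / Real.pi ^ 2) / 2) /
          (2 + 2 * Real.pi ^ 2 + 2 * Real.pi ^ 2 * Real.sqrt (1 + 1 / Real.pi ^ 2)) + 1/2) ∧
    ∀ x : ℝ, x < 1 → |g x| < 1 := by
  have hπ : (0:ℝ) < Real.pi := Real.pi_pos
  have hπ2 : (0:ℝ) < Real.pi ^ 2 := by positivity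
  set s := Real.sqrt (1 + 1 / Real.pi ^ 2) with hsdef
  have hs2 : s ^ 2 = 1 + 1 / Real.pi ^ 2 := Real.sq_sqrt (by positivity)
  have hs0 : 0 < s := Real.sqrt_pos.2 (by positivity)
  have hsπ : s ^ 2 * Real.pi ^ 2 = Real.pi ^ 2 + 1 := by
    rw [hs2]; field_simp
  have hE : (0:ℝ) < 2 + 2 * Real.pi ^ 2 + 2 * Real.pi ^ 2 * s := by positivity
  have key : ∀ x : ℝ, x < 1 → 0 < g x ∧
      g x ≤ (s / 2) / (2 + 2 * Real.pi ^ 2 + 2 * Real.pi ^ 2 * s) + 1/2 := by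
    intro x hx
    have hD : (0:ℝ) < 1 + Real.pi ^ 2 * (x - 1) ^ 2 := by positivity
    constructor
    · rw [hg]
      have hlt : x / (1 + Real.pi ^ 2 * (x - 1) ^ 2) < 1 := by
        rw [div_lt_one hD]; nlinarith [sq_nonneg (x - 1)]
      nlinarith
    · have h1 : g x = (-x) / (2 * (1 + Real.pi ^ 2 * (x - 1) ^ 2)) + 1/2 := by
        rw [hg]; field_simp; ring
      rw [h1]
      have h2 : (-x) / (2 * (1 + Real.pi ^ 2 * (x - 1) ^ 2)) ≤
          (s / 2) / (2 + 2 * Real.pi ^ 2 + 2 * Real.pi ^ 2 * s) := by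
        rw [div_le_div_iff₀ (by positivity) hE]
        nlinarith [mul_nonneg (mul_nonneg hs0.le hπ2.le) (sq_nonneg (x + s)), hsπ]
      linarith
  refine ⟨key, fun x hx => ?_⟩
  obtain ⟨hpos, hle⟩ := key x hx
  rw [abs_of_pos hpos]
  have hB : (s / 2) / (2 + 2 * Real.pi ^ 2 + 2 * Real.pi ^ 2 * s) < 1/2 := by
    rw [div_lt_div_iff₀ hE (by norm_num : (0:ℝ) < 2)]
    nlinarith [mul_pos hπ2 hs0, Real.pi_gt_three, hs0]
  linarith
end
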